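/- arXiv:0809.3010 — 4 statements merged into one kernel-verified Lean document; each statement's English description precedes it below -/
import Mathlib

section
/- If X, Y ⊆ P are nonempty, X ∉ Γ, and X ∪ Y ∈ Γ, then 1 ≤ h(X ∪ Y) − h(X), i.e., H(S) ≤ H(X ∪ Y) − H(X). -/
open MeasureTheory Finset

/-- Shannon entropy of a random variable with values in a finite type:
`H(f) = ∑ₐ −P(f = a)·log P(f = a)`. -/
noncomputable def shannonEntropy {Ω : Type} [MeasurableSpace Ω] {α : Type} [Fintype α]
    (μ : Measure Ω) (f : Ω → α) : ℝ :=
  ∑ a : α, Real.negMulLog ((μ (f ⁻¹' {a})).toReal)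

/-- A family of random variables on a common probability space: one (finite-valued)
random variable `secret` for the secret, and one random variable `share p` for the
share of each participant `p`. -/
structure Scheme (P : Type) [Fintype P] [DecidableEq P] where
  (Ω : Type)
  [mΩ : MeasurableSpace Ω]
  (μ : Measure Ω)
  [prob : IsProbabilityMeasure μ]
  (SecT : Type)
  [secFin : Fintype SecT]
  (ShT : P → Type)
  [shFin : ∀ p, Fintype (ShT p)]
  (secret : Ω → SecT)
  (share : (p : P) → Ω → ShT p)
  (secret_meas : ∀ s : Set SecT, MeasurableSet (secret ⁻¹' s))
  (share_meas : ∀ p, ∀ s : Set (ShT p), MeasurableSet (share p ⁻¹' s))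

namespace Scheme

variable {P : Type} [Fintype P] [DecidableEq P]

/-- `H(S)`: the entropy of the secret. -/
noncomputable def Hsec (S : Scheme P) : ℝ :=
  letI := S.mΩ; letI := S.secFin
  shannonEntropy S.μ S.secret

/-- `H(X)`: the joint entropy of the shares of the participants in `X`. -/
noncomputable def Hset (S : Scheme P) (X : Finset P) : ℝ :=
  letI := S.mΩ; letI := S.shFin
  shannonEntropy S.μ (fun ω => fun p : {y // y ∈ X} => S.share p.1 ω)

/-- `H(X ∪ {S})`: the joint entropy of the shares of the participants in `X`
together with the secret. -/
noncomputable def HsetS (S : Scheme P) (X : Finset P) : ℝ :=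
  letI := S.mΩ; letI := S.secFin; letI := S.shFin
  shannonEntropy S.μ (fun ω => ((fun p : {y // y ∈ X} => S.share p.1 ω), S.secret ω))

/-- The normalized entropy `h(X) = H(X)/H(S)`. -/
noncomputable def hset (S : Scheme P) (X : Finset P) : ℝ := S.Hset X / S.Hsec

/-- The conditional normalized entropy `h(X|Y) = h(X ∪ Y) − h(Y)`. -/
noncomputable def hcond (S : Scheme P) (X Y : Finset P) : ℝ :=
  S.hset (X ∪ Y) - S.hset Y

/-- `Σ` is a perfect secret sharing scheme for the access structure `Γ`:
the conditional entropy `H(S|X) = H(X ∪ {S}) − H(X)` equals `0` for every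
qualified set `X` and equals `H(S)` for every unqualified set `X`. -/
def IsPerfect (S : Scheme P) (Γ : Finset P → Prop) : Prop :=
  (∀ X : Finset P, Γ X → S.HsetS X - S.Hset X = 0) ∧
  (∀ X : Finset P, ¬ Γ X → S.HsetS X - S.Hset X = S.Hsec)

end Scheme

namespace Real

lemma mul_log_le_mul_log_add {x y : ℝ} (hx : 0 ≤ x) (hy : 0 ≤ y) :
    x * log x ≤ x * log (x + y) := by
  rcases hx.eq_or_lt with rfl | hx
  · simp
  · exact mul_le_mul_of_nonneg_left (log_le_log hx (le_add_of_nonneg_right hy)) hx.le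

lemma negMulLog_add_le {x y : ℝ} (hx : 0 ≤ x) (hy : 0 ≤ y) :
    negMulLog (x + y) ≤ negMulLog x + negMulLog y := by
  have hxy := mul_log_le_mul_log_add hx hy
  have hyx := mul_log_le_mul_log_add hy hx
  rw [add_comm y] at hyx
  simp only [negMulLog]
  linarith

lemma negMulLog_sum_le {ι : Type*} (s : Finset ι) (f : ι → ℝ) (hf : ∀ i ∈ s, 0 ≤ f i) :
    negMulLog (∑ i ∈ s, f i) ≤ ∑ i ∈ s, negMulLog (f i) :=
  Finset.le_sum_of_subadditive_on_pred negMulLog (0 ≤ ·) (by simp)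
    (fun _ _ => negMulLog_add_le) (fun _ _ => add_nonneg) f hf

end Real

lemma shannonEntropy_comp_le {Ω α β : Type} [MeasurableSpace Ω] [Fintype α] [Fintype β]
    (μ : Measure Ω) [IsFiniteMeasure μ] (g : Ω → β) (φ : β → α)
    (hg : ∀ b, MeasurableSet (g ⁻¹' {b})) :
    shannonEntropy μ (φ ∘ g) ≤ shannonEntropy μ g := by
  classical
  have fiber_measure (a : α) : (μ ((φ ∘ g) ⁻¹' {a})).toReal
      = ∑ b ∈ univ.filter (φ · = a), (μ (g ⁻¹' {b})).toReal := by
    rw [← ENNReal.toReal_sum (fun _ _ => measure_ne_top μ _),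
      sum_measure_preimage_singleton _ (fun b _ => hg b)]
    congr 2
    ext
    simp
  calc shannonEntropy μ (φ ∘ g)
      ≤ ∑ a : α, ∑ b ∈ univ.filter (φ · = a), Real.negMulLog (μ (g ⁻¹' {b})).toReal :=
        sum_le_sum fun a _ => fiber_measure a ▸
          Real.negMulLog_sum_le _ _ fun _ _ => ENNReal.toReal_nonneg
    _ = shannonEntropy μ g := sum_fiberwise _ _ _

namespace Scheme

variable {P : Type} [Fintype P] [DecidableEq P]

lemma measurableSet_sharesSecret_fiber (S : Scheme P) (X : Finset P)
    (v : (p : {y // y ∈ X}) → S.ShT p.1) (s : S.SecT) :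
    MeasurableSet[S.mΩ]
      ((fun ω => ((fun p : {y // y ∈ X} => S.share p.1 ω), S.secret ω)) ⁻¹' {(v, s)}) := by
  let _ := S.mΩ
  have hfiber : (fun ω => ((fun p : {y // y ∈ X} => S.share p.1 ω), S.secret ω)) ⁻¹' {(v, s)}
      = (⋂ p : {y // y ∈ X}, S.share p.1 ⁻¹' {v p}) ∩ S.secret ⁻¹' {s} := by
    ext ω
    simp [Prod.ext_iff, funext_iff]
  rw [hfiber]
  exact .inter (.iInter fun p => S.share_meas p.1 _) (S.secret_meas _)

lemma HsetS_mono (S : Scheme P) {X Y : Finset P} (hXY : X ⊆ Y) : S.HsetS X ≤ S.HsetS Y := by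
  let _ := S.mΩ
  have _ := S.prob
  let _ := S.secFin
  let _ := S.shFin
  let restrict (z : ((p : {y // y ∈ Y}) → S.ShT p.1) × S.SecT) :
      ((p : {y // y ∈ X}) → S.ShT p.1) × S.SecT :=
    (fun p => z.1 ⟨p.1, hXY p.2⟩, z.2)
  unfold HsetS
  exact shannonEntropy_comp_le S.μ (fun ω => ((fun p : {y // y ∈ Y} => S.share p.1 ω), S.secret ω))
    restrict fun _ => S.measurableSet_sharesSecret_fiber Y _ _

end Scheme

theorem add_one_unqualified_general {P : Type} [Fintype P] [DecidableEq P]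
    (Γ : Finset P → Prop)
    (S : Scheme P) (hperf : S.IsPerfect Γ)
    (X Y : Finset P)
    (hXq : ¬ Γ X) (hXYq : Γ (X ∪ Y)) :
    S.Hsec ≤ S.Hset (X ∪ Y) - S.Hset X := by
  obtain ⟨hqual, hunqual⟩ := hperf
  calc S.Hsec = S.HsetS X - S.Hset X := (hunqual X hXq).symm
    _ ≤ S.HsetS (X ∪ Y) - S.Hset X := by gcongr; exact S.HsetS_mono subset_union_left
    _ = S.Hset (X ∪ Y) - S.Hset X := by linarith [hqual _ hXYq]

/-- If `X, Y ⊆ P` are nonempty, `X ∉ Γ`, and `X ∪ Y ∈ Γ`, then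
`1 ≤ h(X ∪ Y) − h(X)`, i.e. `H(S) ≤ H(X ∪ Y) − H(X)`. -/
theorem add_one_unqualified {P : Type} [Fintype P] [DecidableEq P]
    (Γ : Finset P → Prop) (hΓ : ∀ X Y : Finset P, X ⊆ Y → Γ X → Γ Y)
    (S : Scheme P) (hperf : S.IsPerfect Γ) (hpos : 0 < S.Hsec)
    (X Y : Finset P) (hX : X.Nonempty) (hY : Y.Nonempty)
    (hXq : ¬ Γ X) (hXYq : Γ (X ∪ Y)) :
    S.Hsec ≤ S.Hset (X ∪ Y) - S.Hset X :=
  add_one_unqualified_general Γ S hperf X Y hXq hXYq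
end

section
/- If X, Y ⊆ P are nonempty, r ∈ P, X ∪ Y ∉ Γ, and X ∪ Y ∪ {r} ∈ Γ, then 1 ≤ h(X ∪ {r}) − h(X), i.e., H(S) ≤ H(X ∪ {r}) − H(X). -/
open MeasureTheory Finset

/-!
Perfectness turns `H(S)` into `H(S | X ∪ Y) − H(S | X ∪ Y ∪ {r})`. Adding the share of `r` cannot
decrease `H(X ∪ Y ∪ {S})`, so this is at most `H(X ∪ Y ∪ {r}) − H(X ∪ Y)`, and by submodularity of
entropy (nonnegativity of the conditional mutual information of `r` and `Y` given `X`) that is at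
most `H(X ∪ {r}) − H(X)`.
-/

open Real

lemma negMulLog_sum_le_sum_negMulLog {ι : Type*} (s : Finset ι) {w : ι → ℝ}
    (hw : ∀ i ∈ s, 0 ≤ w i) :
    negMulLog (∑ i ∈ s, w i) ≤ ∑ i ∈ s, negMulLog (w i) := by
  simp only [negMulLog, neg_mul, sum_mul, ← sum_neg_distrib]
  refine sum_le_sum fun i hi => neg_le_neg ?_
  rcases (hw i hi).eq_or_lt with h0 | h0
  · simp [← h0]
  · exact mul_le_mul_of_nonneg_left (log_le_log h0 (single_le_sum hw hi)) h0.le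

lemma sub_mul_div_le_mul_log {q u v t : ℝ} (hq : 0 ≤ q) (hu : q ≤ u) (hv : q ≤ v) (ht : q ≤ t) :
    q - u * v / t ≤ q * (log q + log t - log u - log v) := by
  rcases hq.eq_or_lt with rfl | hq
  · have : 0 ≤ u * v / t := by positivity
    simpa using this
  · have hu := hq.trans_le hu
    have hv := hq.trans_le hv
    have ht := hq.trans_le ht
    have key := one_sub_inv_le_log_of_pos (show 0 < q * t / (u * v) by positivity)
    rw [log_div (by positivity) (by positivity), log_mul hq.ne' ht.ne', log_mul hu.ne' hv.ne',
      inv_div] at key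
    have hcancel : q * (u * v / (q * t)) = u * v / t := by field_simp
    have := mul_le_mul_of_nonneg_left key hq.le
    rw [mul_sub, mul_one, hcancel] at this
    linarith

/-- Nonnegativity of mutual information, for an unnormalized joint distribution `q`. -/
lemma sum_negMulLog_add_negMulLog_sum_le {β γ : Type*} [Fintype β] [Fintype γ]
    {q : β → γ → ℝ} (hq : ∀ b c, 0 ≤ q b c) :
    ∑ b, ∑ c, negMulLog (q b c) + negMulLog (∑ b, ∑ c, q b c)
      ≤ ∑ b, negMulLog (∑ c, q b c) + ∑ c, negMulLog (∑ b, q b c) := by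
  set u := fun b => ∑ c, q b c
  set v := fun c => ∑ b, q b c
  set t := ∑ b, ∑ c, q b c
  have hu : ∑ b, u b = t := rfl
  have hv : ∑ c, v c = t := sum_comm
  have hqu (b c) : q b c ≤ u b := single_le_sum (fun c _ => hq b c) (mem_univ c)
  have hqv (b c) : q b c ≤ v c := single_le_sum (fun b _ => hq b c) (mem_univ b)
  have hut (b) : u b ≤ t := single_le_sum (fun b _ => sum_nonneg fun c _ => hq b c) (mem_univ b)
  -- the mutual information `∑ q log (q t / (u v))` dominates termwise `∑ (q - u v / t) = 0`
  have key : 0 ≤ ∑ b, ∑ c, q b c * (log (q b c) + log t - log (u b) - log (v c)) :=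
    calc 0 = ∑ b, ∑ c, (q b c - u b * v c / t) := by
          simp only [sum_sub_distrib, ← sum_div, ← mul_sum, ← sum_mul, hu, hv]
          rcases eq_or_ne t 0 with h | h
          · simp only [h, div_zero, mul_zero, sub_zero]
            exact h.symm
          · field_simp
            ring
      _ ≤ _ := by
          gcongr with b _ c _
          exact sub_mul_div_le_mul_log (hq b c) (hqu b c) (hqv b c) ((hqu b c).trans (hut b))
  simp only [mul_add, mul_sub, sum_add_distrib, sum_sub_distrib] at key
  rw [sum_comm (f := fun b c => q b c * log (v c))] at key
  simp only [← sum_mul] at key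
  simp only [negMulLog, neg_mul, sum_neg_distrib]
  linarith

section shannonEntropy

variable {Ω α β γ : Type} [MeasurableSpace Ω] {μ : Measure Ω} [Fintype α] [Fintype β] [Fintype γ]

lemma shannonEntropy_def (X : Ω → α) :
    shannonEntropy μ X = ∑ a, negMulLog (μ.real (X ⁻¹' {a})) := rfl

lemma shannonEntropy_comp_of_injective (X : Ω → α) {φ : α → β} (hφ : φ.Injective) :
    shannonEntropy μ (φ ∘ X) = shannonEntropy μ X := by
  refine (Fintype.sum_of_injective φ hφ _ _ (fun b hb => ?_) fun a => ?_).symm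
  · rw [Set.preimage_comp, Set.preimage_singleton_eq_empty.mpr hb]
    simp
  · rw [Set.preimage_comp, ← Set.image_singleton, Set.preimage_image_eq _ hφ]

lemma shannonEntropy_prod (X : Ω → α) (Y : Ω → β) :
    shannonEntropy μ (fun ω => (X ω, Y ω))
      = ∑ a, ∑ b, negMulLog (μ.real (X ⁻¹' {a} ∩ Y ⁻¹' {b})) := by
  simp only [shannonEntropy_def, Fintype.sum_prod_type, ← Set.singleton_prod_singleton,
    Set.mk_preimage_prod]

lemma measureReal_eq_sum_inter_preimage [IsFiniteMeasure μ] (s : Set Ω) {Y : Ω → β}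
    (hY : ∀ b, MeasurableSet (Y ⁻¹' {b})) :
    μ.real s = ∑ b, μ.real (s ∩ Y ⁻¹' {b}) := by
  have := sum_measureReal_preimage_singleton (μ := μ.restrict s) univ fun b _ => hY b
  simp only [coe_univ, Set.preimage_univ, measureReal_restrict_apply_univ,
    measureReal_restrict_apply (hY _), Set.inter_comm _ s] at this
  exact this.symm

lemma shannonEntropy_le_prod [IsFiniteMeasure μ] (X : Ω → α) {Y : Ω → β}
    (hY : ∀ b, MeasurableSet (Y ⁻¹' {b})) :
    shannonEntropy μ X ≤ shannonEntropy μ (fun ω => (X ω, Y ω)) := by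
  rw [shannonEntropy_prod, shannonEntropy_def]
  gcongr with a
  rw [measureReal_eq_sum_inter_preimage _ hY]
  exact negMulLog_sum_le_sum_negMulLog _ fun b _ => measureReal_nonneg

theorem shannonEntropy_submodular [IsFiniteMeasure μ] (X : Ω → α) {Y : Ω → β} {Z : Ω → γ}
    (hY : ∀ b, MeasurableSet (Y ⁻¹' {b})) (hZ : ∀ c, MeasurableSet (Z ⁻¹' {c})) :
    shannonEntropy μ (fun ω => ((X ω, Y ω), Z ω)) + shannonEntropy μ X
      ≤ shannonEntropy μ (fun ω => (X ω, Y ω)) + shannonEntropy μ (fun ω => (X ω, Z ω)) := by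
  set q : α → β → γ → ℝ := fun a b c => μ.real (X ⁻¹' {a} ∩ Y ⁻¹' {b} ∩ Z ⁻¹' {c})
  have hXYZ : shannonEntropy μ (fun ω => ((X ω, Y ω), Z ω))
      = ∑ a, ∑ b, ∑ c, negMulLog (q a b c) := by
    simp only [shannonEntropy_prod, Fintype.sum_prod_type, ← Set.singleton_prod_singleton,
      Set.mk_preimage_prod, q]
  have hXY (a : α) (b : β) : μ.real (X ⁻¹' {a} ∩ Y ⁻¹' {b}) = ∑ c, q a b c :=
    measureReal_eq_sum_inter_preimage _ hZ
  have hXZ (a : α) (c : γ) : μ.real (X ⁻¹' {a} ∩ Z ⁻¹' {c}) = ∑ b, q a b c := by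
    simp only [q, Set.inter_right_comm _ (Y ⁻¹' _)]
    exact measureReal_eq_sum_inter_preimage _ hY
  have hX (a : α) : μ.real (X ⁻¹' {a}) = ∑ b, ∑ c, q a b c := by
    simp only [← hXY]
    exact measureReal_eq_sum_inter_preimage _ hY
  rw [hXYZ, shannonEntropy_def X, shannonEntropy_prod, shannonEntropy_prod]
  simp only [hXY, hXZ, hX, ← sum_add_distrib]
  exact sum_le_sum fun a _ => sum_negMulLog_add_negMulLog_sum_le fun b c => measureReal_nonneg

end shannonEntropy

lemma Finset.restrict₂_union_injective {ι : Type*} [DecidableEq ι] {κ : ι → Type*}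
    {A B : Finset ι} :
    Function.Injective fun f : (i : ↥(A ∪ B)) → κ i =>
      (restrict₂ subset_union_left f, restrict₂ subset_union_right f) := by
  intro f g hfg
  simp only [Prod.mk.injEq, funext_iff, restrict₂, Subtype.forall] at hfg
  ext ⟨i, hi⟩
  rcases mem_union.mp hi with hiA | hiB
  · exact hfg.1 i hiA
  · exact hfg.2 i hiB

namespace Scheme

variable {P : Type} [Fintype P] [DecidableEq P] (S : Scheme P)

attribute [instance] mΩ prob secFin shFin

def shares (Z : Finset P) (ω : S.Ω) : (p : Z) → S.ShT p := fun p => S.share p ω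

lemma measurableSet_shares_preimage_singleton (Z : Finset P) (t : (p : Z) → S.ShT p) :
    MeasurableSet (S.shares Z ⁻¹' {t}) := by
  have : S.shares Z ⁻¹' {t} = ⋂ p : Z, S.share p ⁻¹' {t p} := by
    ext ω
    simp [shares, funext_iff]
  rw [this]
  exact .iInter fun p => S.share_meas p _

lemma Hset_union (A B : Finset P) :
    S.Hset (A ∪ B) = shannonEntropy S.μ (fun ω => (S.shares A ω, S.shares B ω)) :=
  (shannonEntropy_comp_of_injective (S.shares (A ∪ B)) restrict₂_union_injective).symm

lemma HsetS_union (A B : Finset P) :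
    S.HsetS (A ∪ B)
      = shannonEntropy S.μ (fun ω => ((S.shares A ω, S.secret ω), S.shares B ω)) := by
  have hinj : Function.Injective fun x : ((p : ↥(A ∪ B)) → S.ShT p) × S.SecT =>
      ((restrict₂ subset_union_left x.1, x.2), restrict₂ subset_union_right x.1) := by
    rintro ⟨f, s⟩ ⟨g, s'⟩ h
    simp only [Prod.mk.injEq] at h
    exact Prod.ext (restrict₂_union_injective (Prod.ext h.1.1 h.2)) h.1.2
  exact (shannonEntropy_comp_of_injective _ hinj).symm

lemma HsetS_le_HsetS_union (A B : Finset P) : S.HsetS A ≤ S.HsetS (A ∪ B) := by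
  rw [HsetS_union]
  exact shannonEntropy_le_prod _ (S.measurableSet_shares_preimage_singleton B)

lemma Hset_union_union_add_le (X Y Z : Finset P) :
    S.Hset (X ∪ Y ∪ Z) + S.Hset X ≤ S.Hset (X ∪ Y) + S.Hset (X ∪ Z) := by
  have hXYZ : S.Hset (X ∪ Y ∪ Z)
      = shannonEntropy S.μ (fun ω => ((S.shares X ω, S.shares Y ω), S.shares Z ω)) := by
    rw [Hset_union, ← shannonEntropy_comp_of_injective _
      (restrict₂_union_injective.prodMap Function.injective_id)]
    rfl
  rw [hXYZ, Hset_union, Hset_union]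
  exact shannonEntropy_submodular _ (S.measurableSet_shares_preimage_singleton Y)
    (S.measurableSet_shares_preimage_singleton Z)

end Scheme

theorem superset_unqualified_general {P : Type} [Fintype P] [DecidableEq P]
    (Γ : Finset P → Prop)
    (S : Scheme P) (hperf : S.IsPerfect Γ)
    (X Y : Finset P) (r : P)
    (hXYq : ¬ Γ (X ∪ Y)) (hXYrq : Γ (X ∪ Y ∪ {r})) :
    S.Hsec ≤ S.Hset (X ∪ {r}) - S.Hset X := by
  calc S.Hsec = (S.HsetS (X ∪ Y) - S.Hset (X ∪ Y))
        - (S.HsetS (X ∪ Y ∪ {r}) - S.Hset (X ∪ Y ∪ {r})) := by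
        rw [hperf.2 _ hXYq, hperf.1 _ hXYrq, sub_zero]
    _ ≤ S.Hset (X ∪ Y ∪ {r}) - S.Hset (X ∪ Y) := by
        linarith [S.HsetS_le_HsetS_union (X ∪ Y) {r}]
    _ ≤ S.Hset (X ∪ {r}) - S.Hset X := by
        linarith [S.Hset_union_union_add_le X Y {r}]

/-- If `X, Y ⊆ P` are nonempty, `r ∈ P`, `X ∪ Y ∉ Γ`, and `X ∪ Y ∪ {r} ∈ Γ`, then
`1 ≤ h(X ∪ {r}) − h(X)`, i.e. `H(S) ≤ H(X ∪ {r}) − H(X)`. -/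
theorem superset_unqualified {P : Type} [Fintype P] [DecidableEq P]
    (Γ : Finset P → Prop) (hΓ : ∀ X Y : Finset P, X ⊆ Y → Γ X → Γ Y)
    (S : Scheme P) (hperf : S.IsPerfect Γ) (hpos : 0 < S.Hsec)
    (X Y : Finset P) (r : P) (hX : X.Nonempty) (hY : Y.Nonempty)
    (hXYq : ¬ Γ (X ∪ Y)) (hXYrq : Γ (X ∪ Y ∪ {r})) :
    S.Hsec ≤ S.Hset (X ∪ {r}) - S.Hset X :=
  superset_unqualified_general Γ S hperf X Y r hXYq hXYrq
end

section
/- If X, Y ⊆ P with X ∩ Y nonempty, X ∩ Y ∉ Γ, and X ∈ Γ and Y ∈ Γ, then h(X ∩ Y) + h(X ∪ Y) + 1 ≤ h(X) + h(Y), i.e., H(X ∩ Y) + H(X ∪ Y) + H(S) ≤ H(X) + H(Y). -/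
open MeasureTheory Finset

/-!
Perfectness turns the claim into submodularity of `X ↦ H(X ∪ {S})`: adding the secret costs
nothing on the qualified sets `X`, `Y`, `X ∪ Y` and exactly `H(S)` on the unqualified `X ∩ Y`.
Submodularity is the Shannon inequality `H(A,B,C) + H(C) ≤ H(A,C) + H(B,C)` for `A`, `B` the
shares of `X \ Y`, `Y \ X` and `C` the shares of `X ∩ Y` together with the secret. For each value
of `C` this is subadditivity of entropy, i.e. Gibbs' inequality against the product of the
marginals; it needs no normalisation, so summing over the values of `C` gives the inequality.
-/

open Real

lemma negMulLog_add_mul_log_le {p q : ℝ} (hp : 0 ≤ p) (hq : 0 < q) :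
    negMulLog p + p * log q ≤ q - p := by
  rcases hp.eq_or_lt with rfl | hp
  · simpa using hq.le
  have h := mul_le_mul_of_nonneg_left (log_le_sub_one_of_pos (div_pos hq hp)) hp.le
  rw [log_div hq.ne' hp.ne', mul_sub_one, mul_div_cancel₀ q hp.ne'] at h
  rw [negMulLog]
  linarith

theorem negMulLog_sum_add_sum_negMulLog_le {α β : Type*} [Fintype α] [Fintype β]
    (p : α → β → ℝ) (hp : ∀ a b, 0 ≤ p a b) :
    negMulLog (∑ a, ∑ b, p a b) + ∑ a, ∑ b, negMulLog (p a b) ≤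
      ∑ a, negMulLog (∑ b, p a b) + ∑ b, negMulLog (∑ a, p a b) := by
  set r : α → ℝ := fun a ↦ ∑ b, p a b
  set s : β → ℝ := fun b ↦ ∑ a, p a b
  set t : ℝ := ∑ a, r a
  have hr : ∀ a, 0 ≤ r a := fun a ↦ sum_nonneg fun b _ ↦ hp a b
  have hs : ∀ b, 0 ≤ s b := fun b ↦ sum_nonneg fun a _ ↦ hp a b
  have ht : 0 ≤ t := sum_nonneg fun a _ ↦ hr a
  -- Gibbs' inequality against the product `r a * s b / t` of the marginals
  have gibbs : ∀ a b, negMulLog (p a b) + p a b * (log (r a) + log (s b) - log t) ≤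
      r a * s b / t - p a b := by
    intro a b
    rcases (hp a b).eq_or_lt with h0 | h0
    · rw [← h0, negMulLog_zero, zero_mul, add_zero, sub_zero]
      exact div_nonneg (mul_nonneg (hr a) (hs b)) ht
    have hra : 0 < r a := h0.trans_le (single_le_sum (fun b _ ↦ hp a b) (mem_univ b))
    have hsb : 0 < s b := h0.trans_le (single_le_sum (fun a _ ↦ hp a b) (mem_univ a))
    have htp : 0 < t := hra.trans_le (single_le_sum (fun a _ ↦ hr a) (mem_univ a))
    rw [← log_mul hra.ne' hsb.ne', ← log_div (by positivity) htp.ne']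
    exact negMulLog_add_mul_log_le h0.le (by positivity)
  have hR : ∑ a, ∑ b, p a b * log (r a) = -∑ a, negMulLog (r a) := by
    simp [negMulLog, ← sum_mul, r]
  have hS : ∑ a, ∑ b, p a b * log (s b) = -∑ b, negMulLog (s b) := by
    rw [sum_comm]; simp [negMulLog, ← sum_mul, s]
  have hT : ∑ a, ∑ b, p a b * log t = -negMulLog t := by
    simp [negMulLog, ← sum_mul, t, r]
  have hQ : ∑ a, ∑ b, (r a * s b / t - p a b) = 0 := by
    have hst : ∑ b, s b = t := sum_comm
    simp only [sum_sub_distrib, ← mul_sum, ← sum_div, ← sum_mul, hst]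
    exact (mul_self_div_self t).symm ▸ sub_self t
  have hsum := hQ ▸ sum_le_sum fun a (_ : a ∈ univ) ↦
    sum_le_sum fun b (_ : b ∈ univ) ↦ gibbs a b
  simp only [mul_add, mul_sub, sum_add_distrib, sum_sub_distrib, hR, hS, hT] at hsum
  linarith

section Entropy

variable {Ω : Type} [MeasurableSpace Ω] (μ : Measure Ω) {α β γ : Type} [Fintype α] [Fintype β]

theorem shannonEntropy_comp_of_injective_s4 (F : Ω → α) {e : α → β} (he : Function.Injective e) :
    shannonEntropy μ (fun ω ↦ e (F ω)) = shannonEntropy μ F := by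
  refine (Fintype.sum_of_injective e he _ _ (fun b hb ↦ ?_) (fun a ↦ ?_)).symm
  · have hempty : (fun ω ↦ e (F ω)) ⁻¹' {b} = ∅ :=
      Set.eq_empty_of_forall_notMem fun ω hω ↦ hb ⟨F ω, hω⟩
    rw [hempty, measure_empty, ENNReal.toReal_zero, negMulLog_zero]
  · have hfiber : (fun ω ↦ e (F ω)) ⁻¹' {e a} = F ⁻¹' {a} := by
      ext ω; simp [he.eq_iff]
    rw [hfiber]

theorem measureReal_eq_sum_preimage_singleton_inter [IsFiniteMeasure μ] (V : Ω → β)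
    (hV : ∀ b, MeasurableSet (V ⁻¹' {b})) (A : Set Ω) :
    μ.real A = ∑ b, μ.real (V ⁻¹' {b} ∩ A) := by
  simp_rw [← measureReal_restrict_apply (hV _)]
  rw [sum_measureReal_preimage_singleton _ fun b _ ↦ hV b, coe_univ, Set.preimage_univ,
    measureReal_restrict_apply_univ]

theorem shannonEntropy_pair (F : Ω → α) (G : Ω → β) :
    shannonEntropy μ (fun ω ↦ (F ω, G ω)) =
      ∑ a, ∑ b, negMulLog (μ.real (F ⁻¹' {a} ∩ G ⁻¹' {b})) := by
  rw [shannonEntropy, Fintype.sum_prod_type]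
  simp only [← Set.singleton_prod_singleton, Set.mk_preimage_prod, measureReal_def]

theorem shannonEntropy_triple_add_shannonEntropy_le [Fintype γ] [IsFiniteMeasure μ]
    (f : Ω → α) (g : Ω → β) (h : Ω → γ)
    (hf : ∀ a, MeasurableSet (f ⁻¹' {a})) (hg : ∀ b, MeasurableSet (g ⁻¹' {b})) :
    shannonEntropy μ (fun ω ↦ (f ω, g ω, h ω)) + shannonEntropy μ h ≤
      shannonEntropy μ (fun ω ↦ (f ω, h ω)) + shannonEntropy μ (fun ω ↦ (g ω, h ω)) := by
  set p : α → β → γ → ℝ := fun a b c ↦ μ.real (f ⁻¹' {a} ∩ (g ⁻¹' {b} ∩ h ⁻¹' {c}))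
  have marginal_fh : ∀ a c, μ.real (f ⁻¹' {a} ∩ h ⁻¹' {c}) = ∑ b, p a b c := fun a c ↦ by
    rw [measureReal_eq_sum_preimage_singleton_inter μ g hg]
    exact sum_congr rfl fun b _ ↦ by rw [Set.inter_left_comm]
  have H_fgh :
      shannonEntropy μ (fun ω ↦ (f ω, g ω, h ω)) = ∑ c, ∑ a, ∑ b, negMulLog (p a b c) := by
    rw [shannonEntropy_pair]
    simp only [Fintype.sum_prod_type, ← Set.singleton_prod_singleton, Set.mk_preimage_prod]
    exact (sum_congr rfl fun a _ ↦ sum_comm).trans sum_comm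
  have H_h : shannonEntropy μ h = ∑ c, negMulLog (∑ a, ∑ b, p a b c) := by
    simp only [shannonEntropy, ← measureReal_def,
      measureReal_eq_sum_preimage_singleton_inter μ f hf (h ⁻¹' _), marginal_fh]
  have H_fh : shannonEntropy μ (fun ω ↦ (f ω, h ω)) = ∑ c, ∑ a, negMulLog (∑ b, p a b c) := by
    rw [shannonEntropy_pair, sum_comm]
    simp only [marginal_fh]
  have H_gh : shannonEntropy μ (fun ω ↦ (g ω, h ω)) = ∑ c, ∑ b, negMulLog (∑ a, p a b c) := by
    rw [shannonEntropy_pair, sum_comm]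
    simp only [measureReal_eq_sum_preimage_singleton_inter μ f hf (g ⁻¹' _ ∩ _), p]
  have key := sum_le_sum fun c (_ : c ∈ univ) ↦
    negMulLog_sum_add_sum_negMulLog_le (p · · c) fun _ _ ↦ measureReal_nonneg
  rw [H_fgh, H_h, H_fh, H_gh]
  simp only [sum_add_distrib] at key
  linarith

end Entropy

section Restrict

variable {ι : Type} [DecidableEq ι] {T : ι → Type} {γ : Type}

def restrictSplit {A B Z : Finset ι} (hA : A ⊆ Z) (hB : B ⊆ Z) :
    ((i : Z) → T i) × γ → ((i : A) → T i) × ((i : B) → T i) × γ :=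
  fun vw ↦ (restrict₂ hA vw.1, restrict₂ hB vw.1, vw.2)

theorem restrictSplit_injective {A B Z : Finset ι} (hA : A ⊆ Z) (hB : B ⊆ Z) (hZ : Z ⊆ A ∪ B) :
    Function.Injective (restrictSplit (T := T) (γ := γ) hA hB) := by
  rintro ⟨v, w⟩ ⟨v', w'⟩ h
  simp only [restrictSplit, Prod.mk.injEq] at h
  obtain ⟨hvA, hvB, rfl⟩ := h
  refine Prod.ext (funext fun i ↦ ?_) rfl
  rcases mem_union.1 (hZ i.2) with hi | hi
  · exact congrFun hvA ⟨i, hi⟩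
  · exact congrFun hvB ⟨i, hi⟩

end Restrict

section Shares

variable {Ω : Type} [MeasurableSpace Ω] (μ : Measure Ω) {ι : Type} {T : ι → Type}

theorem measurableSet_restrict_preimage_singleton (x : (i : ι) → Ω → T i)
    (hx : ∀ i t, MeasurableSet (x i ⁻¹' {t})) (A : Finset ι) (v : (i : A) → T i) :
    MeasurableSet ((fun ω ↦ A.restrict (x · ω)) ⁻¹' {v}) := by
  have hfiber : (fun ω ↦ A.restrict (x · ω)) ⁻¹' {v} = ⋂ i : A, x i ⁻¹' {v i} := by
    ext ω; simp [funext_iff]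
  rw [hfiber]
  exact MeasurableSet.iInter fun i ↦ hx i _

theorem shannonEntropy_restrict_inter_add_union_le [DecidableEq ι] [∀ i, Fintype (T i)]
    {γ : Type} [Fintype γ] [IsFiniteMeasure μ] (x : (i : ι) → Ω → T i)
    (hx : ∀ i t, MeasurableSet (x i ⁻¹' {t})) (W : Ω → γ) (X Y : Finset ι) :
    shannonEntropy μ (fun ω ↦ ((X ∩ Y).restrict (x · ω), W ω)) +
        shannonEntropy μ (fun ω ↦ ((X ∪ Y).restrict (x · ω), W ω)) ≤
      shannonEntropy μ (fun ω ↦ (X.restrict (x · ω), W ω)) +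
        shannonEntropy μ (fun ω ↦ (Y.restrict (x · ω), W ω)) := by
  set f := fun ω ↦ (X \ Y).restrict (x · ω)
  set g := fun ω ↦ (Y \ X).restrict (x · ω)
  set h := fun ω ↦ ((X ∩ Y).restrict (x · ω), W ω)
  have hY_cover : Y ⊆ Y \ X ∪ X ∩ Y := by rw [inter_comm]; exact (sdiff_union_inter Y X).ge
  have H_X : shannonEntropy μ (fun ω ↦ (X.restrict (x · ω), W ω)) =
      shannonEntropy μ (fun ω ↦ (f ω, h ω)) :=
    (shannonEntropy_comp_of_injective_s4 μ _ (restrictSplit_injective sdiff_subset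
      inter_subset_left (sdiff_union_inter X Y).ge)).symm
  have H_Y : shannonEntropy μ (fun ω ↦ (Y.restrict (x · ω), W ω)) =
      shannonEntropy μ (fun ω ↦ (g ω, h ω)) :=
    (shannonEntropy_comp_of_injective_s4 μ _ (restrictSplit_injective sdiff_subset
      inter_subset_right hY_cover)).symm
  have H_XY : shannonEntropy μ (fun ω ↦ ((X ∪ Y).restrict (x · ω), W ω)) =
      shannonEntropy μ (fun ω ↦ (f ω, g ω, h ω)) := by
    rw [← shannonEntropy_comp_of_injective_s4 μ _ (restrictSplit_injective
      (sdiff_subset.trans subset_union_left) subset_union_right sdiff_union_self_eq_union.ge)]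
    exact (shannonEntropy_comp_of_injective_s4 μ _ (Function.injective_id.prodMap
      (restrictSplit_injective sdiff_subset inter_subset_right hY_cover))).symm
  have := shannonEntropy_triple_add_shannonEntropy_le μ f g h
    (measurableSet_restrict_preimage_singleton x hx _)
    (measurableSet_restrict_preimage_singleton x hx _)
  rw [H_X, H_Y, H_XY]
  linarith

end Shares

theorem Scheme.HsetS_inter_add_HsetS_union_le {P : Type} [Fintype P] [DecidableEq P]
    (S : Scheme P) (X Y : Finset P) :
    S.HsetS (X ∩ Y) + S.HsetS (X ∪ Y) ≤ S.HsetS X + S.HsetS Y :=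
  letI := S.mΩ; haveI := S.prob; letI := S.secFin; letI := S.shFin
  shannonEntropy_restrict_inter_add_union_le S.μ S.share (fun p t ↦ S.share_meas p {t})
    S.secret X Y

theorem qualified_two_ways_general {P : Type} [Fintype P] [DecidableEq P]
    (Γ : Finset P → Prop) (hΓ : ∀ X Y : Finset P, X ⊆ Y → Γ X → Γ Y)
    (S : Scheme P) (hperf : S.IsPerfect Γ)
    (X Y : Finset P)
    (hXYq : ¬ Γ (X ∩ Y)) (hXq : Γ X) (hYq : Γ Y) :
    S.Hset (X ∩ Y) + S.Hset (X ∪ Y) + S.Hsec ≤ S.Hset X + S.Hset Y := by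
  obtain ⟨hqual, hunqual⟩ := hperf
  have hX := hqual X hXq
  have hY := hqual Y hYq
  have hXY := hqual (X ∪ Y) (hΓ X _ subset_union_left hXq)
  have hinter := hunqual (X ∩ Y) hXYq
  linarith [S.HsetS_inter_add_HsetS_union_le X Y]

/-- If `X ∩ Y` is nonempty and unqualified while `X` and `Y` are both qualified, then
`h(X ∩ Y) + h(X ∪ Y) + 1 ≤ h(X) + h(Y)`, i.e.
`H(X ∩ Y) + H(X ∪ Y) + H(S) ≤ H(X) + H(Y)`. -/
theorem qualified_two_ways {P : Type} [Fintype P] [DecidableEq P]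
    (Γ : Finset P → Prop) (hΓ : ∀ X Y : Finset P, X ⊆ Y → Γ X → Γ Y)
    (S : Scheme P) (hperf : S.IsPerfect Γ) (hpos : 0 < S.Hsec)
    (X Y : Finset P) (hXY : (X ∩ Y).Nonempty)
    (hXYq : ¬ Γ (X ∩ Y)) (hXq : Γ X) (hYq : Γ Y) :
    S.Hset (X ∩ Y) + S.Hset (X ∪ Y) + S.Hsec ≤ S.Hset X + S.Hset Y :=
  qualified_two_ways_general Γ hΓ S hperf X Y hXYq hXq hYq
end

section
/- Let X and Y be distinct Vamos pairs with X ∪ Y a circuit of the Vamos matroid, and suppose the dealer is a member of Y. Then for any perfect secret sharing scheme, h(X|Y) ≤ 1 + 2λ. -/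
open MeasureTheory Finset

/-- The four Vamos pairs `A = {v₁,v₂}`, `B = {v₃,v₄}`, `C = {v₅,v₆}`, `D = {v₇,v₈}`,
where participant `vᵢ` is represented by `(i-1 : Fin 8)`. -/
def pairA : Finset (Fin 8) := {0, 1}
def pairB : Finset (Fin 8) := {2, 3}
def pairC : Finset (Fin 8) := {4, 5}
def pairD : Finset (Fin 8) := {6, 7}

/-- `X` is one of the four Vamos pairs. -/
def IsVamosPair (X : Finset (Fin 8)) : Prop :=
  X = pairA ∨ X = pairB ∨ X = pairC ∨ X = pairD

/-- The dependent sets of the Vamos matroid: the five special four-element sets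
`AB`, `AC`, `BC`, `BD`, `CD`, and all sets with at least five elements. -/
def VamosDep (X : Finset (Fin 8)) : Prop :=
  X = pairA ∪ pairB ∨ X = pairA ∪ pairC ∨ X = pairB ∪ pairC ∨
    X = pairB ∪ pairD ∨ X = pairC ∪ pairD ∨ 5 ≤ X.card

/-- The circuits of the Vamos matroid: minimal dependent sets. -/
def VamosCircuit (X : Finset (Fin 8)) : Prop :=
  VamosDep X ∧ ∀ Y ⊂ X, ¬ VamosDep Y

/-- The access structure `Γₓ` induced by the Vamos matroid with dealer `x`
(the dealer is regarded as a participant who is individually qualified):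
a set is qualified iff it contains a minimal qualified set, the minimal
qualified sets being `{x}` and the sets `M ⊆ Q \ {x}` with `M ∪ {x}` a circuit. -/
def VamosQualified (x : Fin 8) (Y : Finset (Fin 8)) : Prop :=
  x ∈ Y ∨ ∃ M ⊆ Y, x ∉ M ∧ VamosCircuit (insert x M)

/-- `λ = (max₁≤ᵢ≤₈ h({vᵢ})) − 1`. -/
noncomputable def Scheme.lam (S : Scheme (Fin 8)) : ℝ :=
  (Finset.univ.sup' Finset.univ_nonempty fun i : Fin 8 => S.hset {i}) - 1

/-- The information rate `ρ(Σ) = min₁≤ᵢ≤₈ H(S)/H(vᵢ)` of a scheme. -/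
noncomputable def Scheme.rho (S : Scheme (Fin 8)) : ℝ :=
  Finset.univ.inf' Finset.univ_nonempty fun i : Fin 8 => S.Hsec / S.Hset {i}

-- auxiliary lemmas
section Aux
open Real

lemma gibbs_term {p pb pab pbc : ℝ} (hp : 0 ≤ p) (hpab : p ≤ pab) (hpbc : p ≤ pbc)
    (habb : pab ≤ pb) (hab : 0 ≤ pab) (hbc : 0 ≤ pbc) (hb : 0 ≤ pb) :
    p - pab * pbc / pb ≤
      p * Real.log p + p * Real.log pb - p * Real.log pab - p * Real.log pbc := by
  rcases eq_or_lt_of_le hp with h0 | h0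
  · have hq : 0 ≤ pab * pbc / pb := div_nonneg (mul_nonneg hab hbc) hb
    simp [← h0]
    linarith
  · have hab' : 0 < pab := lt_of_lt_of_le h0 hpab
    have hbc' : 0 < pbc := lt_of_lt_of_le h0 hpbc
    have hb' : 0 < pb := lt_of_lt_of_le hab' habb
    set q : ℝ := pab * pbc / pb with hqdef
    have hq' : 0 < q := div_pos (mul_pos hab' hbc') hb'
    have hlog : Real.log (q / p) ≤ q / p - 1 :=
      Real.log_le_sub_one_of_pos (div_pos hq' h0)
    have hexp : Real.log (q / p) =
        Real.log pab + Real.log pbc - Real.log pb - Real.log p := by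
      rw [hqdef, Real.log_div (by positivity) (ne_of_gt h0),
        Real.log_div (by positivity) (ne_of_gt hb'),
        Real.log_mul (ne_of_gt hab') (ne_of_gt hbc')]
    have := mul_le_mul_of_nonneg_left hlog hp
    rw [hexp] at this
    have hqp : p * (q / p - 1) = q - p := by
      field_simp
    rw [hqp] at this
    nlinarith [this]

lemma pmf_submod {α β γ : Type} [Fintype α] [Fintype β] [Fintype γ]
    (p : α → β → γ → ℝ) (hp : ∀ a b c, 0 ≤ p a b c)
    (hsum : ∑ a, ∑ b, ∑ c, p a b c = 1) :
    (∑ a, ∑ b, ∑ c, Real.negMulLog (p a b c)) +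
      ∑ b, Real.negMulLog (∑ a, ∑ c, p a b c) ≤
    (∑ a, ∑ b, Real.negMulLog (∑ c, p a b c)) +
      ∑ b, ∑ c, Real.negMulLog (∑ a, p a b c) := by
  classical
  set pAB : α → β → ℝ := fun a b => ∑ c, p a b c with hpABdef
  set pBC : β → γ → ℝ := fun b c => ∑ a, p a b c with hpBCdef
  set pB : β → ℝ := fun b => ∑ a, ∑ c, p a b c with hpBdef
  have hABnn : ∀ a b, 0 ≤ pAB a b := fun a b => Finset.sum_nonneg fun c _ => hp a b c
  have hBCnn : ∀ b c, 0 ≤ pBC b c := fun b c => Finset.sum_nonneg fun a _ => hp a b c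
  have hBnn : ∀ b, 0 ≤ pB b := fun b => Finset.sum_nonneg fun a _ => hABnn a b
  have hle1 : ∀ a b c, p a b c ≤ pAB a b := fun a b c =>
    Finset.single_le_sum (fun c _ => hp a b c) (Finset.mem_univ c)
  have hle2 : ∀ a b c, p a b c ≤ pBC b c := fun a b c =>
    Finset.single_le_sum (fun a _ => hp a b c) (Finset.mem_univ a)
  have hle3 : ∀ a b, pAB a b ≤ pB b := fun a b =>
    Finset.single_le_sum (fun a _ => hABnn a b) (Finset.mem_univ a)
  have hterm : ∀ a b c, p a b c - pAB a b * pBC b c / pB b ≤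
      p a b c * Real.log (p a b c) + p a b c * Real.log (pB b)
      - p a b c * Real.log (pAB a b) - p a b c * Real.log (pBC b c) :=
    fun a b c => gibbs_term (hp a b c) (hle1 a b c) (hle2 a b c) (hle3 a b)
      (hABnn a b) (hBCnn b c) (hBnn b)
  have hBC_margin : ∀ b, ∑ c, pBC b c = pB b := by
    intro b
    rw [hpBCdef, hpBdef]
    exact Finset.sum_comm
  have hAB_margin : ∀ b, ∑ a, pAB a b = pB b := fun b => rfl
  have hqsum : ∑ a, ∑ b, ∑ c, pAB a b * pBC b c / pB b ≤ 1 := by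
    rw [Finset.sum_comm]
    have h1 : ∀ b, ∑ a, ∑ c, pAB a b * pBC b c / pB b = pB b * pB b / pB b := by
      intro b
      have h2 : ∀ a, ∑ c, pAB a b * pBC b c / pB b = pAB a b * pB b / pB b := by
        intro a
        rw [← Finset.sum_div, ← Finset.mul_sum, hBC_margin]
      simp_rw [h2]
      rw [← Finset.sum_div, ← Finset.sum_mul, hAB_margin]
    simp_rw [h1]
    have h3 : ∀ b, pB b * pB b / pB b ≤ pB b := by
      intro b
      rcases eq_or_ne (pB b) 0 with h | h
      · simp [h]
      · rw [mul_div_assoc, div_self h, mul_one]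
    calc ∑ b, pB b * pB b / pB b ≤ ∑ b, pB b := Finset.sum_le_sum fun b _ => h3 b
      _ = 1 := by rw [hpBdef, ← hsum]; exact Finset.sum_comm
  have hsum_ineq : 0 ≤ ∑ a, ∑ b, ∑ c,
      (p a b c * Real.log (p a b c) + p a b c * Real.log (pB b)
        - p a b c * Real.log (pAB a b) - p a b c * Real.log (pBC b c)) := by
    have h4 : ∑ a, ∑ b, ∑ c, (p a b c - pAB a b * pBC b c / pB b) ≤
        ∑ a, ∑ b, ∑ c, (p a b c * Real.log (p a b c) + p a b c * Real.log (pB b)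
          - p a b c * Real.log (pAB a b) - p a b c * Real.log (pBC b c)) :=
      Finset.sum_le_sum fun a _ => Finset.sum_le_sum fun b _ =>
        Finset.sum_le_sum fun c _ => hterm a b c
    have h5 : ∑ a, ∑ b, ∑ c, (p a b c - pAB a b * pBC b c / pB b)
        = 1 - ∑ a, ∑ b, ∑ c, pAB a b * pBC b c / pB b := by
      simp [Finset.sum_sub_distrib, hsum]
    linarith
  have hA : ∑ a, ∑ b, ∑ c, p a b c * Real.log (pB b)
      = ∑ b, pB b * Real.log (pB b) := by
    rw [Finset.sum_comm]
    refine Finset.sum_congr rfl fun b _ => ?_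
    have h6 : ∀ x, ∑ c, p x b c * Real.log (pB b) = pAB x b * Real.log (pB b) :=
      fun x => (Finset.sum_mul ..).symm
    simp_rw [h6]
    rw [← Finset.sum_mul, hAB_margin]
  have hB : ∑ a, ∑ b, ∑ c, p a b c * Real.log (pAB a b)
      = ∑ a, ∑ b, pAB a b * Real.log (pAB a b) := by
    refine Finset.sum_congr rfl fun a _ => Finset.sum_congr rfl fun b _ => ?_
    exact (Finset.sum_mul ..).symm
  have hC : ∑ a, ∑ b, ∑ c, p a b c * Real.log (pBC b c)
      = ∑ b, ∑ c, pBC b c * Real.log (pBC b c) := by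
    rw [Finset.sum_comm]
    refine Finset.sum_congr rfl fun b _ => ?_
    rw [Finset.sum_comm]
    refine Finset.sum_congr rfl fun c _ => ?_
    exact (Finset.sum_mul ..).symm
  have hsplit : ∑ a, ∑ b, ∑ c,
      (p a b c * Real.log (p a b c) + p a b c * Real.log (pB b)
        - p a b c * Real.log (pAB a b) - p a b c * Real.log (pBC b c))
      = (∑ a, ∑ b, ∑ c, p a b c * Real.log (p a b c))
        + (∑ a, ∑ b, ∑ c, p a b c * Real.log (pB b))
        - (∑ a, ∑ b, ∑ c, p a b c * Real.log (pAB a b))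
        - (∑ a, ∑ b, ∑ c, p a b c * Real.log (pBC b c)) := by
    simp [Finset.sum_add_distrib, Finset.sum_sub_distrib]
  simp only [Real.negMulLog, neg_mul, Finset.sum_neg_distrib]
  linarith [hsum_ineq, hsplit, hA, hB, hC]


section MeasAux
variable {Ω : Type} [MeasurableSpace Ω] (μ : MeasureTheory.Measure Ω)
  [MeasureTheory.IsProbabilityMeasure μ]

lemma measure_toReal_eq_sum_parts {ε : Type} [Fintype ε] (s : Set Ω) (U : Ω → ε)
    (h : ∀ e, MeasurableSet (s ∩ U ⁻¹' {e})) :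
    (μ s).toReal = ∑ e, (μ (s ∩ U ⁻¹' {e})).toReal := by
  have hdisj : Pairwise (Function.onFun Disjoint fun e => s ∩ U ⁻¹' {e}) := by
    intro e e' hne
    simp only [Function.onFun]
    rw [Set.disjoint_left]
    rintro ω ⟨-, h1⟩ ⟨-, h2⟩
    simp only [Set.mem_preimage, Set.mem_singleton_iff] at h1 h2
    exact hne (h1.symm.trans h2)
  have hs : s = ⋃ e, s ∩ U ⁻¹' {e} := by
    ext ω
    simp only [Set.mem_iUnion, Set.mem_inter_iff, Set.mem_preimage, Set.mem_singleton_iff]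
    exact ⟨fun hω => ⟨U ω, hω, rfl⟩, fun ⟨e, hω, _⟩ => hω⟩
  rw [← ENNReal.toReal_sum (fun e _ => MeasureTheory.measure_ne_top μ _)]
  congr 1
  calc μ s = μ (⋃ e, s ∩ U ⁻¹' {e}) := by rw [← hs]
    _ = ∑' e, μ (s ∩ U ⁻¹' {e}) := MeasureTheory.measure_iUnion hdisj h
    _ = ∑ e, μ (s ∩ U ⁻¹' {e}) := tsum_fintype _

omit [MeasureTheory.IsProbabilityMeasure μ] in
lemma shannonEntropy_comp_inj {α β : Type} [Fintype α] [Fintype β]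
    (f : Ω → α) (e : α → β) (he : Function.Injective e) :
    shannonEntropy μ (fun ω => e (f ω)) = shannonEntropy μ f := by
  classical
  unfold shannonEntropy
  have hvanish : ∀ b ∈ Finset.univ, b ∉ Finset.image e Finset.univ →
      Real.negMulLog ((μ ((fun ω => e (f ω)) ⁻¹' {b})).toReal) = 0 := by
    intro b _ hb
    have : (fun ω => e (f ω)) ⁻¹' {b} = ∅ := by
      ext ω
      simp only [Set.mem_preimage, Set.mem_singleton_iff, Set.mem_empty_iff_false, iff_false]
      intro hc
      exact hb (Finset.mem_image.2 ⟨f ω, Finset.mem_univ _, hc⟩)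
    simp [this]
  rw [← Finset.sum_subset (Finset.subset_univ (Finset.image e Finset.univ)) hvanish,
    Finset.sum_image (fun a _ a' _ h => he h)]
  refine Finset.sum_congr rfl fun a _ => ?_
  have hpre : (fun ω => e (f ω)) ⁻¹' {e a} = f ⁻¹' {a} := by
    ext ω; simp [he.eq_iff]
  rw [hpre]

lemma shannonEntropy_unit (g : Ω → Unit) : shannonEntropy μ g = 0 := by
  unfold shannonEntropy
  have : g ⁻¹' {()} = Set.univ := by
    ext ω; simp
  simp [this]

theorem shannonEntropy_submod {α β γ : Type} [Fintype α] [Fintype β] [Fintype γ]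
    (f : Ω → α) (g : Ω → β) (h : Ω → γ)
    (hm : ∀ z : α × β × γ, MeasurableSet ((fun ω => (f ω, g ω, h ω)) ⁻¹' {z})) :
    shannonEntropy μ (fun ω => (f ω, g ω, h ω)) + shannonEntropy μ g ≤
      shannonEntropy μ (fun ω => (f ω, g ω)) + shannonEntropy μ (fun ω => (g ω, h ω)) := by
  classical
  set t : Ω → α × β × γ := fun ω => (f ω, g ω, h ω) with htdef
  set P : α → β → γ → ℝ := fun a b c => (μ (t ⁻¹' {(a, b, c)})).toReal with hPdef
  have hP0 : ∀ a b c, 0 ≤ P a b c := fun a b c => ENNReal.toReal_nonneg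
  have hkey1 : ∀ (a : α) (b : β) (c : γ),
      g ⁻¹' {b} ∩ (fun ω => (f ω, h ω)) ⁻¹' {(a, c)} = t ⁻¹' {(a, b, c)} := by
    intro a b c
    ext ω
    simp only [Set.mem_inter_iff, Set.mem_preimage, Set.mem_singleton_iff, Prod.ext_iff, htdef]
    tauto
  have hkey2 : ∀ (a : α) (b : β) (c : γ),
      (fun ω => (f ω, g ω)) ⁻¹' {(a, b)} ∩ h ⁻¹' {c} = t ⁻¹' {(a, b, c)} := by
    intro a b c
    ext ω
    simp only [Set.mem_inter_iff, Set.mem_preimage, Set.mem_singleton_iff, Prod.ext_iff, htdef]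
    tauto
  have hkey3 : ∀ (a : α) (b : β) (c : γ),
      (fun ω => (g ω, h ω)) ⁻¹' {(b, c)} ∩ f ⁻¹' {a} = t ⁻¹' {(a, b, c)} := by
    intro a b c
    ext ω
    simp only [Set.mem_inter_iff, Set.mem_preimage, Set.mem_singleton_iff, Prod.ext_iff, htdef]
    tauto
  have hsum : ∑ a, ∑ b, ∑ c, P a b c = 1 := by
    have h1 := measure_toReal_eq_sum_parts μ (Set.univ : Set Ω) t
      (fun z => by rw [Set.univ_inter]; exact hm z)
    simp only [Set.univ_inter, MeasureTheory.measure_univ, ENNReal.toReal_one] at h1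
    have h2 : ∑ z : α × β × γ, (μ (t ⁻¹' {z})).toReal = ∑ a, ∑ b, ∑ c, P a b c := by
      rw [Fintype.sum_prod_type]
      exact Finset.sum_congr rfl fun a _ => Fintype.sum_prod_type _
    rw [h2] at h1
    exact h1.symm
  have hg : ∀ b, (μ (g ⁻¹' {b})).toReal = ∑ a, ∑ c, P a b c := by
    intro b
    have h1 := measure_toReal_eq_sum_parts μ (g ⁻¹' {b}) (fun ω => (f ω, h ω))
      (fun z => by rw [hkey1 z.1 b z.2]; exact hm _)
    rw [h1, Fintype.sum_prod_type]
    exact Finset.sum_congr rfl fun a _ => Finset.sum_congr rfl fun c _ => by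
      rw [hkey1]
  have hfg : ∀ a b, (μ ((fun ω => (f ω, g ω)) ⁻¹' {(a, b)})).toReal = ∑ c, P a b c := by
    intro a b
    have h1 := measure_toReal_eq_sum_parts μ ((fun ω => (f ω, g ω)) ⁻¹' {(a, b)}) h
      (fun c => by rw [hkey2 a b c]; exact hm _)
    rw [h1]
    exact Finset.sum_congr rfl fun c _ => by rw [hkey2]
  have hgh : ∀ b c, (μ ((fun ω => (g ω, h ω)) ⁻¹' {(b, c)})).toReal = ∑ a, P a b c := by
    intro b c
    have h1 := measure_toReal_eq_sum_parts μ ((fun ω => (g ω, h ω)) ⁻¹' {(b, c)}) f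
      (fun a => by rw [hkey3 a b c]; exact hm _)
    rw [h1]
    exact Finset.sum_congr rfl fun a _ => by rw [hkey3]
  have e1 : shannonEntropy μ t = ∑ a, ∑ b, ∑ c, Real.negMulLog (P a b c) := by
    unfold shannonEntropy
    rw [Fintype.sum_prod_type]
    exact Finset.sum_congr rfl fun a _ => Fintype.sum_prod_type _
  have e2 : shannonEntropy μ g = ∑ b, Real.negMulLog (∑ a, ∑ c, P a b c) := by
    unfold shannonEntropy
    exact Finset.sum_congr rfl fun b _ => by rw [hg]
  have e3 : shannonEntropy μ (fun ω => (f ω, g ω))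
      = ∑ a, ∑ b, Real.negMulLog (∑ c, P a b c) := by
    unfold shannonEntropy
    rw [Fintype.sum_prod_type]
    exact Finset.sum_congr rfl fun a _ => Finset.sum_congr rfl fun b _ => by rw [hfg]
  have e4 : shannonEntropy μ (fun ω => (g ω, h ω))
      = ∑ b, ∑ c, Real.negMulLog (∑ a, P a b c) := by
    unfold shannonEntropy
    rw [Fintype.sum_prod_type]
    exact Finset.sum_congr rfl fun b _ => Finset.sum_congr rfl fun c _ => by rw [hgh]
  rw [e1, e2, e3, e4]
  exact pmf_submod P hP0 hsum
lemma meas_pair {α β : Type} [Fintype α] [Fintype β] {f : Ω → α} {g : Ω → β}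
    (hf : ∀ s : Set α, MeasurableSet (f ⁻¹' s)) (hg : ∀ s : Set β, MeasurableSet (g ⁻¹' s)) :
    ∀ s : Set (α × β), MeasurableSet ((fun ω => (f ω, g ω)) ⁻¹' s) := by
  intro s
  have hrep : (fun ω => (f ω, g ω)) ⁻¹' s = ⋃ z ∈ s, (f ⁻¹' {z.1} ∩ g ⁻¹' {z.2}) := by
    ext ω
    simp only [Set.mem_preimage, Set.mem_iUnion, Set.mem_inter_iff, Set.mem_singleton_iff]
    constructor
    · intro hω; exact ⟨(f ω, g ω), hω, rfl, rfl⟩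
    · rintro ⟨z, hz, h1, h2⟩
      have : z = (f ω, g ω) := by
        rw [Prod.ext_iff]; exact ⟨h1.symm, h2.symm⟩
      rwa [this] at hz
  rw [hrep]
  exact MeasurableSet.biUnion (Set.to_countable s) fun z _ => (hf _).inter (hg _)

theorem shannonEntropy_subadd {α γ : Type} [Fintype α] [Fintype γ]
    (f : Ω → α) (h : Ω → γ)
    (hm : ∀ z : α × γ, MeasurableSet ((fun ω => (f ω, h ω)) ⁻¹' {z})) :
    shannonEntropy μ (fun ω => (f ω, h ω)) ≤ shannonEntropy μ f + shannonEntropy μ h := by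
  have hm3 : ∀ z : α × Unit × γ,
      MeasurableSet ((fun ω => (f ω, (), h ω)) ⁻¹' {z}) := by
    rintro ⟨a, u, c⟩
    have hpre : (fun ω => (f ω, (), h ω)) ⁻¹' {(a, u, c)}
        = (fun ω => (f ω, h ω)) ⁻¹' {(a, c)} := by
      ext ω; simp [Prod.ext_iff]
    rw [hpre]; exact hm _
  have hsub := shannonEntropy_submod μ f (fun _ => ()) h hm3
  rw [shannonEntropy_unit] at hsub
  have r1 : shannonEntropy μ (fun ω => (f ω, (), h ω))
      = shannonEntropy μ (fun ω => (f ω, h ω)) :=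
    shannonEntropy_comp_inj μ (fun ω => (f ω, h ω)) (fun z => (z.1, (), z.2))
      (fun z z' hz => by simpa [Prod.ext_iff] using hz)
  have r2 : shannonEntropy μ (fun ω => (f ω, ())) = shannonEntropy μ f :=
    shannonEntropy_comp_inj μ f (fun a => (a, ()))
      (fun z z' hz => by simpa [Prod.ext_iff] using hz)
  have r3 : shannonEntropy μ (fun ω => ((), h ω)) = shannonEntropy μ h :=
    shannonEntropy_comp_inj μ h (fun c => ((), c))
      (fun z z' hz => by simpa [Prod.ext_iff] using hz)
  rw [r1, r2, r3] at hsub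
  linarith

end MeasAux

end Aux

section SchemeAux
open Real

namespace Scheme

variable (S : Scheme (Fin 8))

set_option maxHeartbeats 2000000 in
lemma Hset_pair_le (a y : Fin 8) : S.Hset {a, y} ≤ S.Hset {a} + S.Hset {y} := by
  letI := S.mΩ; letI := S.prob; letI := S.shFin
  have hsub := shannonEntropy_subadd S.μ (S.share a) (S.share y)
    (fun z => meas_pair (S.share_meas a) (S.share_meas y) {z})
  have r1 : S.Hset {a, y}
      = shannonEntropy S.μ (fun ω => (S.share a ω, S.share y ω)) := by
    unfold Scheme.Hset
    refine (shannonEntropy_comp_inj S.μ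
      (fun ω => fun p : {v // v ∈ ({a, y} : Finset (Fin 8))} => S.share p.1 ω)
      (fun F => (F ⟨a, by simp⟩, F ⟨y, by simp⟩)) ?_).symm
    intro F G hFG
    simp only [Prod.mk.injEq] at hFG
    funext p
    obtain ⟨v, hv⟩ := p
    simp only [Finset.mem_insert, Finset.mem_singleton] at hv
    rcases hv with rfl | rfl
    · exact hFG.1
    · exact hFG.2
  have r2 : S.Hset {a} = shannonEntropy S.μ (S.share a) := by
    unfold Scheme.Hset
    refine (shannonEntropy_comp_inj S.μ
      (fun ω => fun p : {v // v ∈ ({a} : Finset (Fin 8))} => S.share p.1 ω)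
      (fun F => F ⟨a, by simp⟩) ?_).symm
    intro F G hFG
    funext p
    obtain ⟨v, hv⟩ := p
    simp only [Finset.mem_singleton] at hv
    rcases hv with rfl
    exact hFG
  have r3 : S.Hset {y} = shannonEntropy S.μ (S.share y) := by
    unfold Scheme.Hset
    refine (shannonEntropy_comp_inj S.μ
      (fun ω => fun p : {v // v ∈ ({y} : Finset (Fin 8))} => S.share p.1 ω)
      (fun F => F ⟨y, by simp⟩) ?_).symm
    intro F G hFG
    funext p
    obtain ⟨v, hv⟩ := p
    simp only [Finset.mem_singleton] at hv
    rcases hv with rfl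
    exact hFG
  rw [r1, r2, r3]
  exact hsub

set_option maxHeartbeats 2000000 in
lemma Hset_triple_le (a b y : Fin 8) :
    S.Hset {a, b, y} ≤ S.Hset {a, y} + S.Hset {b} := by
  letI := S.mΩ; letI := S.prob; letI := S.shFin
  have hsub := shannonEntropy_subadd S.μ
    (fun ω => (S.share a ω, S.share y ω)) (S.share b)
    (fun z => meas_pair (meas_pair (S.share_meas a) (S.share_meas y))
      (S.share_meas b) {z})
  have r1 : S.Hset {a, b, y}
      = shannonEntropy S.μ
        (fun ω => ((S.share a ω, S.share y ω), S.share b ω)) := by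
    unfold Scheme.Hset
    refine (shannonEntropy_comp_inj S.μ
      (fun ω => fun p : {v // v ∈ ({a, b, y} : Finset (Fin 8))} => S.share p.1 ω)
      (fun F => ((F ⟨a, by simp⟩, F ⟨y, by simp⟩), F ⟨b, by simp⟩)) ?_).symm
    intro F G hFG
    simp only [Prod.mk.injEq] at hFG
    funext p
    obtain ⟨v, hv⟩ := p
    simp only [Finset.mem_insert, Finset.mem_singleton] at hv
    rcases hv with rfl | rfl | rfl
    · exact hFG.1.1
    · exact hFG.2
    · exact hFG.1.2
  have r2 : S.Hset {a, y}
      = shannonEntropy S.μ (fun ω => (S.share a ω, S.share y ω)) := by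
    unfold Scheme.Hset
    refine (shannonEntropy_comp_inj S.μ
      (fun ω => fun p : {v // v ∈ ({a, y} : Finset (Fin 8))} => S.share p.1 ω)
      (fun F => (F ⟨a, by simp⟩, F ⟨y, by simp⟩)) ?_).symm
    intro F G hFG
    simp only [Prod.mk.injEq] at hFG
    funext p
    obtain ⟨v, hv⟩ := p
    simp only [Finset.mem_insert, Finset.mem_singleton] at hv
    rcases hv with rfl | rfl
    · exact hFG.1
    · exact hFG.2
  have r3 : S.Hset {b} = shannonEntropy S.μ (S.share b) := by
    unfold Scheme.Hset
    refine (shannonEntropy_comp_inj S.μ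
      (fun ω => fun p : {v // v ∈ ({b} : Finset (Fin 8))} => S.share p.1 ω)
      (fun F => F ⟨b, by simp⟩) ?_).symm
    intro F G hFG
    funext p
    obtain ⟨v, hv⟩ := p
    simp only [Finset.mem_singleton] at hv
    rcases hv with rfl
    exact hFG
  rw [r1, r2, r3]
  exact hsub

set_option maxHeartbeats 2000000 in
lemma HsetS_submod (a b x y : Fin 8) :
    S.HsetS {a, b, x, y} + S.HsetS {y} ≤ S.HsetS {a, b, y} + S.HsetS {x, y} := by
  letI := S.mΩ; letI := S.prob; letI := S.shFin; letI := S.secFin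
  have hsub := shannonEntropy_submod S.μ
    (fun ω => (S.share a ω, S.share b ω))
    (fun ω => (S.share y ω, S.secret ω))
    (S.share x)
    (fun z => meas_pair (meas_pair (S.share_meas a) (S.share_meas b))
      (meas_pair (meas_pair (S.share_meas y) S.secret_meas) (S.share_meas x)) {z})
  have r1 : S.HsetS {a, b, x, y}
      = shannonEntropy S.μ (fun ω => ((S.share a ω, S.share b ω),
          (S.share y ω, S.secret ω), S.share x ω)) := by
    unfold Scheme.HsetS
    refine (shannonEntropy_comp_inj S.μ
      (fun ω => ((fun p : {v // v ∈ ({a, b, x, y} : Finset (Fin 8))} => S.share p.1 ω),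
        S.secret ω))
      (fun F => ((F.1 ⟨a, by simp⟩, F.1 ⟨b, by simp⟩),
        (F.1 ⟨y, by simp⟩, F.2), F.1 ⟨x, by simp⟩)) ?_).symm
    intro F G hFG
    simp only [Prod.mk.injEq] at hFG
    rw [Prod.ext_iff]
    refine ⟨?_, hFG.2.1.2⟩
    funext p
    obtain ⟨v, hv⟩ := p
    simp only [Finset.mem_insert, Finset.mem_singleton] at hv
    rcases hv with rfl | rfl | rfl | rfl
    · exact hFG.1.1
    · exact hFG.1.2
    · exact hFG.2.2
    · exact hFG.2.1.1
  have r2 : S.HsetS {y}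
      = shannonEntropy S.μ (fun ω => (S.share y ω, S.secret ω)) := by
    unfold Scheme.HsetS
    refine (shannonEntropy_comp_inj S.μ
      (fun ω => ((fun p : {v // v ∈ ({y} : Finset (Fin 8))} => S.share p.1 ω),
        S.secret ω))
      (fun F => (F.1 ⟨y, by simp⟩, F.2)) ?_).symm
    intro F G hFG
    simp only [Prod.mk.injEq] at hFG
    rw [Prod.ext_iff]
    refine ⟨?_, hFG.2⟩
    funext p
    obtain ⟨v, hv⟩ := p
    simp only [Finset.mem_singleton] at hv
    rcases hv with rfl
    exact hFG.1
  have r3 : S.HsetS {a, b, y}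
      = shannonEntropy S.μ (fun ω => ((S.share a ω, S.share b ω),
          (S.share y ω, S.secret ω))) := by
    unfold Scheme.HsetS
    refine (shannonEntropy_comp_inj S.μ
      (fun ω => ((fun p : {v // v ∈ ({a, b, y} : Finset (Fin 8))} => S.share p.1 ω),
        S.secret ω))
      (fun F => ((F.1 ⟨a, by simp⟩, F.1 ⟨b, by simp⟩), (F.1 ⟨y, by simp⟩, F.2))) ?_).symm
    intro F G hFG
    simp only [Prod.mk.injEq] at hFG
    rw [Prod.ext_iff]
    refine ⟨?_, hFG.2.2⟩
    funext p
    obtain ⟨v, hv⟩ := p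
    simp only [Finset.mem_insert, Finset.mem_singleton] at hv
    rcases hv with rfl | rfl | rfl
    · exact hFG.1.1
    · exact hFG.1.2
    · exact hFG.2.1
  have r4 : S.HsetS {x, y}
      = shannonEntropy S.μ (fun ω => ((S.share y ω, S.secret ω), S.share x ω)) := by
    unfold Scheme.HsetS
    refine (shannonEntropy_comp_inj S.μ
      (fun ω => ((fun p : {v // v ∈ ({x, y} : Finset (Fin 8))} => S.share p.1 ω),
        S.secret ω))
      (fun F => ((F.1 ⟨y, by simp⟩, F.2), F.1 ⟨x, by simp⟩)) ?_).symm
    intro F G hFG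
    simp only [Prod.mk.injEq] at hFG
    rw [Prod.ext_iff]
    refine ⟨?_, hFG.1.2⟩
    funext p
    obtain ⟨v, hv⟩ := p
    simp only [Finset.mem_insert, Finset.mem_singleton] at hv
    rcases hv with rfl | rfl
    · exact hFG.2
    · exact hFG.1.1
  rw [r1, r2, r3, r4]
  exact hsub

end Scheme

end SchemeAux

lemma vamosCircuit_card {C : Finset (Fin 8)} (h : VamosCircuit C) : 4 ≤ C.card := by
  rcases h.1 with h1 | h1 | h1 | h1 | h1 | h1
  · rw [h1]; decide
  · rw [h1]; decide
  · rw [h1]; decide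
  · rw [h1]; decide
  · rw [h1]; decide
  · omega

lemma notQual_of_small {x : Fin 8} {Z : Finset (Fin 8)} (hx : x ∉ Z) (hcard : Z.card ≤ 2) :
    ¬ VamosQualified x Z := by
  rintro (h | ⟨M, hM, hxM, hc⟩)
  · exact hx h
  · have h1 := Finset.card_insert_le x M
    have h2 := Finset.card_le_card hM
    have h3 := vamosCircuit_card hc
    omega

lemma key_ineq (S : Scheme (Fin 8)) (x : Fin 8)
    (hperf : S.IsPerfect (VamosQualified x)) (hpos : 0 < S.Hsec)
    (a b y : Fin 8)
    (hq1 : VamosQualified x {a, b, x, y}) (hq2 : VamosQualified x {x, y})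
    (hq3 : VamosQualified x {a, b, y}) (hu : ¬ VamosQualified x {y}) :
    S.hcond {a, b} {x, y} ≤ 1 + 2 * S.lam := by
  have e1 := hperf.1 _ hq1
  have e2 := hperf.1 _ hq2
  have e3 := hperf.1 _ hq3
  have e4 := hperf.2 _ hu
  have s3 := S.HsetS_submod a b x y
  have s5 := S.Hset_triple_le a b y
  have s6 := S.Hset_pair_le a y
  have hun : ({a, b} : Finset (Fin 8)) ∪ {x, y} = {a, b, x, y} := by
    ext v
    simp only [Finset.mem_union, Finset.mem_insert, Finset.mem_singleton]
    tauto
  have hH : S.Hset ({a, b} ∪ {x, y}) - S.Hset {x, y}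
      ≤ S.Hset {a} + S.Hset {b} - S.Hsec := by
    rw [hun]; linarith
  have hmax : ∀ v : Fin 8, S.hset {v} ≤ 1 + S.lam := by
    intro v
    have h := Finset.le_sup' (fun i : Fin 8 => S.hset {i}) (Finset.mem_univ v)
    unfold Scheme.lam
    linarith
  have hA := hmax a
  have hB := hmax b
  have final : (S.Hset ({a, b} ∪ {x, y}) - S.Hset {x, y}) / S.Hsec ≤ 1 + 2 * S.lam := by
    have h1 : (S.Hset ({a, b} ∪ {x, y}) - S.Hset {x, y}) / S.Hsec
        ≤ (S.Hset {a} + S.Hset {b} - S.Hsec) / S.Hsec := by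
      gcongr
    have h2 : (S.Hset {a} + S.Hset {b} - S.Hsec) / S.Hsec
        = S.hset {a} + S.hset {b} - 1 := by
      unfold Scheme.hset
      rw [sub_div, add_div, div_self (ne_of_gt hpos)]
    rw [h2] at h1
    linarith
  unfold Scheme.hcond Scheme.hset
  rw [div_sub_div_same]
  exact final


/-- If `X`, `Y` are distinct Vamos pairs with `X ∪ Y` a circuit and the dealer a
member of `Y`, then `h(X|Y) ≤ 1 + 2λ`. -/
theorem hcond_le_one_add_two_lam (x : Fin 8)
    (S : Scheme (Fin 8)) (hperf : S.IsPerfect (VamosQualified x)) (hpos : 0 < S.Hsec)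
    (X Y : Finset (Fin 8)) (hX : IsVamosPair X) (hY : IsVamosPair Y) (hne : X ≠ Y)
    (hcirc : VamosCircuit (X ∪ Y)) (hx : x ∈ Y) :
    S.hcond X Y ≤ 1 + 2 * S.lam := by
  rcases hX with rfl | rfl | rfl | rfl
  · rcases hY with rfl | rfl | rfl | rfl
    · exact absurd rfl hne
    · have hx' : x = 2 ∨ x = 3 := by simpa [pairB] using hx
      rcases hx' with rfl | rfl
      · have hq1 : VamosQualified 2 {0, 1, 2, 3} := Or.inl (by decide)
        have hq2 : VamosQualified 2 {2, 3} := Or.inl (by decide)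
        have hq3 : VamosQualified 2 ({0, 1, 3} : Finset (Fin 8)) := by
          refine Or.inr ⟨{0, 1, 3}, Finset.Subset.refl _, by decide, ?_⟩
          have he : insert (2 : Fin 8) ({0, 1, 3} : Finset (Fin 8)) = pairA ∪ pairB := by decide
          rw [he]; exact hcirc
        have hu : ¬ VamosQualified 2 {3} := notQual_of_small (by decide) (by decide)
        have h := key_ineq S 2 hperf hpos 0 1 3 hq1 hq2 hq3 hu
        have hP : (pairA : Finset (Fin 8)) = {0, 1} := by decide
        have hQ : (pairB : Finset (Fin 8)) = {2, 3} := by decide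
        rw [hP, hQ]
        exact h
      · have hq1 : VamosQualified 3 {0, 1, 3, 2} := Or.inl (by decide)
        have hq2 : VamosQualified 3 {3, 2} := Or.inl (by decide)
        have hq3 : VamosQualified 3 ({0, 1, 2} : Finset (Fin 8)) := by
          refine Or.inr ⟨{0, 1, 2}, Finset.Subset.refl _, by decide, ?_⟩
          have he : insert (3 : Fin 8) ({0, 1, 2} : Finset (Fin 8)) = pairA ∪ pairB := by decide
          rw [he]; exact hcirc
        have hu : ¬ VamosQualified 3 {2} := notQual_of_small (by decide) (by decide)
        have h := key_ineq S 3 hperf hpos 0 1 2 hq1 hq2 hq3 hu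
        have hP : (pairA : Finset (Fin 8)) = {0, 1} := by decide
        have hQ : (pairB : Finset (Fin 8)) = {3, 2} := by decide
        rw [hP, hQ]
        exact h
    · have hx' : x = 4 ∨ x = 5 := by simpa [pairC] using hx
      rcases hx' with rfl | rfl
      · have hq1 : VamosQualified 4 {0, 1, 4, 5} := Or.inl (by decide)
        have hq2 : VamosQualified 4 {4, 5} := Or.inl (by decide)
        have hq3 : VamosQualified 4 ({0, 1, 5} : Finset (Fin 8)) := by
          refine Or.inr ⟨{0, 1, 5}, Finset.Subset.refl _, by decide, ?_⟩
          have he : insert (4 : Fin 8) ({0, 1, 5} : Finset (Fin 8)) = pairA ∪ pairC := by decide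
          rw [he]; exact hcirc
        have hu : ¬ VamosQualified 4 {5} := notQual_of_small (by decide) (by decide)
        have h := key_ineq S 4 hperf hpos 0 1 5 hq1 hq2 hq3 hu
        have hP : (pairA : Finset (Fin 8)) = {0, 1} := by decide
        have hQ : (pairC : Finset (Fin 8)) = {4, 5} := by decide
        rw [hP, hQ]
        exact h
      · have hq1 : VamosQualified 5 {0, 1, 5, 4} := Or.inl (by decide)
        have hq2 : VamosQualified 5 {5, 4} := Or.inl (by decide)
        have hq3 : VamosQualified 5 ({0, 1, 4} : Finset (Fin 8)) := by
          refine Or.inr ⟨{0, 1, 4}, Finset.Subset.refl _, by decide, ?_⟩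
          have he : insert (5 : Fin 8) ({0, 1, 4} : Finset (Fin 8)) = pairA ∪ pairC := by decide
          rw [he]; exact hcirc
        have hu : ¬ VamosQualified 5 {4} := notQual_of_small (by decide) (by decide)
        have h := key_ineq S 5 hperf hpos 0 1 4 hq1 hq2 hq3 hu
        have hP : (pairA : Finset (Fin 8)) = {0, 1} := by decide
        have hQ : (pairC : Finset (Fin 8)) = {5, 4} := by decide
        rw [hP, hQ]
        exact h
    · exact absurd hcirc.1 (by unfold VamosDep; decide)
  · rcases hY with rfl | rfl | rfl | rfl
    · have hx' : x = 0 ∨ x = 1 := by simpa [pairA] using hx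
      rcases hx' with rfl | rfl
      · have hq1 : VamosQualified 0 {2, 3, 0, 1} := Or.inl (by decide)
        have hq2 : VamosQualified 0 {0, 1} := Or.inl (by decide)
        have hq3 : VamosQualified 0 ({2, 3, 1} : Finset (Fin 8)) := by
          refine Or.inr ⟨{2, 3, 1}, Finset.Subset.refl _, by decide, ?_⟩
          have he : insert (0 : Fin 8) ({2, 3, 1} : Finset (Fin 8)) = pairB ∪ pairA := by decide
          rw [he]; exact hcirc
        have hu : ¬ VamosQualified 0 {1} := notQual_of_small (by decide) (by decide)
        have h := key_ineq S 0 hperf hpos 2 3 1 hq1 hq2 hq3 hu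
        have hP : (pairB : Finset (Fin 8)) = {2, 3} := by decide
        have hQ : (pairA : Finset (Fin 8)) = {0, 1} := by decide
        rw [hP, hQ]
        exact h
      · have hq1 : VamosQualified 1 {2, 3, 1, 0} := Or.inl (by decide)
        have hq2 : VamosQualified 1 {1, 0} := Or.inl (by decide)
        have hq3 : VamosQualified 1 ({2, 3, 0} : Finset (Fin 8)) := by
          refine Or.inr ⟨{2, 3, 0}, Finset.Subset.refl _, by decide, ?_⟩
          have he : insert (1 : Fin 8) ({2, 3, 0} : Finset (Fin 8)) = pairB ∪ pairA := by decide
          rw [he]; exact hcirc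
        have hu : ¬ VamosQualified 1 {0} := notQual_of_small (by decide) (by decide)
        have h := key_ineq S 1 hperf hpos 2 3 0 hq1 hq2 hq3 hu
        have hP : (pairB : Finset (Fin 8)) = {2, 3} := by decide
        have hQ : (pairA : Finset (Fin 8)) = {1, 0} := by decide
        rw [hP, hQ]
        exact h
    · exact absurd rfl hne
    · have hx' : x = 4 ∨ x = 5 := by simpa [pairC] using hx
      rcases hx' with rfl | rfl
      · have hq1 : VamosQualified 4 {2, 3, 4, 5} := Or.inl (by decide)
        have hq2 : VamosQualified 4 {4, 5} := Or.inl (by decide)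
        have hq3 : VamosQualified 4 ({2, 3, 5} : Finset (Fin 8)) := by
          refine Or.inr ⟨{2, 3, 5}, Finset.Subset.refl _, by decide, ?_⟩
          have he : insert (4 : Fin 8) ({2, 3, 5} : Finset (Fin 8)) = pairB ∪ pairC := by decide
          rw [he]; exact hcirc
        have hu : ¬ VamosQualified 4 {5} := notQual_of_small (by decide) (by decide)
        have h := key_ineq S 4 hperf hpos 2 3 5 hq1 hq2 hq3 hu
        have hP : (pairB : Finset (Fin 8)) = {2, 3} := by decide
        have hQ : (pairC : Finset (Fin 8)) = {4, 5} := by decide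
        rw [hP, hQ]
        exact h
      · have hq1 : VamosQualified 5 {2, 3, 5, 4} := Or.inl (by decide)
        have hq2 : VamosQualified 5 {5, 4} := Or.inl (by decide)
        have hq3 : VamosQualified 5 ({2, 3, 4} : Finset (Fin 8)) := by
          refine Or.inr ⟨{2, 3, 4}, Finset.Subset.refl _, by decide, ?_⟩
          have he : insert (5 : Fin 8) ({2, 3, 4} : Finset (Fin 8)) = pairB ∪ pairC := by decide
          rw [he]; exact hcirc
        have hu : ¬ VamosQualified 5 {4} := notQual_of_small (by decide) (by decide)
        have h := key_ineq S 5 hperf hpos 2 3 4 hq1 hq2 hq3 hu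
        have hP : (pairB : Finset (Fin 8)) = {2, 3} := by decide
        have hQ : (pairC : Finset (Fin 8)) = {5, 4} := by decide
        rw [hP, hQ]
        exact h
    · have hx' : x = 6 ∨ x = 7 := by simpa [pairD] using hx
      rcases hx' with rfl | rfl
      · have hq1 : VamosQualified 6 {2, 3, 6, 7} := Or.inl (by decide)
        have hq2 : VamosQualified 6 {6, 7} := Or.inl (by decide)
        have hq3 : VamosQualified 6 ({2, 3, 7} : Finset (Fin 8)) := by
          refine Or.inr ⟨{2, 3, 7}, Finset.Subset.refl _, by decide, ?_⟩
          have he : insert (6 : Fin 8) ({2, 3, 7} : Finset (Fin 8)) = pairB ∪ pairD := by decide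
          rw [he]; exact hcirc
        have hu : ¬ VamosQualified 6 {7} := notQual_of_small (by decide) (by decide)
        have h := key_ineq S 6 hperf hpos 2 3 7 hq1 hq2 hq3 hu
        have hP : (pairB : Finset (Fin 8)) = {2, 3} := by decide
        have hQ : (pairD : Finset (Fin 8)) = {6, 7} := by decide
        rw [hP, hQ]
        exact h
      · have hq1 : VamosQualified 7 {2, 3, 7, 6} := Or.inl (by decide)
        have hq2 : VamosQualified 7 {7, 6} := Or.inl (by decide)
        have hq3 : VamosQualified 7 ({2, 3, 6} : Finset (Fin 8)) := by
          refine Or.inr ⟨{2, 3, 6}, Finset.Subset.refl _, by decide, ?_⟩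
          have he : insert (7 : Fin 8) ({2, 3, 6} : Finset (Fin 8)) = pairB ∪ pairD := by decide
          rw [he]; exact hcirc
        have hu : ¬ VamosQualified 7 {6} := notQual_of_small (by decide) (by decide)
        have h := key_ineq S 7 hperf hpos 2 3 6 hq1 hq2 hq3 hu
        have hP : (pairB : Finset (Fin 8)) = {2, 3} := by decide
        have hQ : (pairD : Finset (Fin 8)) = {7, 6} := by decide
        rw [hP, hQ]
        exact h
  · rcases hY with rfl | rfl | rfl | rfl
    · have hx' : x = 0 ∨ x = 1 := by simpa [pairA] using hx
      rcases hx' with rfl | rfl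
      · have hq1 : VamosQualified 0 {4, 5, 0, 1} := Or.inl (by decide)
        have hq2 : VamosQualified 0 {0, 1} := Or.inl (by decide)
        have hq3 : VamosQualified 0 ({4, 5, 1} : Finset (Fin 8)) := by
          refine Or.inr ⟨{4, 5, 1}, Finset.Subset.refl _, by decide, ?_⟩
          have he : insert (0 : Fin 8) ({4, 5, 1} : Finset (Fin 8)) = pairC ∪ pairA := by decide
          rw [he]; exact hcirc
        have hu : ¬ VamosQualified 0 {1} := notQual_of_small (by decide) (by decide)
        have h := key_ineq S 0 hperf hpos 4 5 1 hq1 hq2 hq3 hu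
        have hP : (pairC : Finset (Fin 8)) = {4, 5} := by decide
        have hQ : (pairA : Finset (Fin 8)) = {0, 1} := by decide
        rw [hP, hQ]
        exact h
      · have hq1 : VamosQualified 1 {4, 5, 1, 0} := Or.inl (by decide)
        have hq2 : VamosQualified 1 {1, 0} := Or.inl (by decide)
        have hq3 : VamosQualified 1 ({4, 5, 0} : Finset (Fin 8)) := by
          refine Or.inr ⟨{4, 5, 0}, Finset.Subset.refl _, by decide, ?_⟩
          have he : insert (1 : Fin 8) ({4, 5, 0} : Finset (Fin 8)) = pairC ∪ pairA := by decide
          rw [he]; exact hcirc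
        have hu : ¬ VamosQualified 1 {0} := notQual_of_small (by decide) (by decide)
        have h := key_ineq S 1 hperf hpos 4 5 0 hq1 hq2 hq3 hu
        have hP : (pairC : Finset (Fin 8)) = {4, 5} := by decide
        have hQ : (pairA : Finset (Fin 8)) = {1, 0} := by decide
        rw [hP, hQ]
        exact h
    · have hx' : x = 2 ∨ x = 3 := by simpa [pairB] using hx
      rcases hx' with rfl | rfl
      · have hq1 : VamosQualified 2 {4, 5, 2, 3} := Or.inl (by decide)
        have hq2 : VamosQualified 2 {2, 3} := Or.inl (by decide)
        have hq3 : VamosQualified 2 ({4, 5, 3} : Finset (Fin 8)) := by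
          refine Or.inr ⟨{4, 5, 3}, Finset.Subset.refl _, by decide, ?_⟩
          have he : insert (2 : Fin 8) ({4, 5, 3} : Finset (Fin 8)) = pairC ∪ pairB := by decide
          rw [he]; exact hcirc
        have hu : ¬ VamosQualified 2 {3} := notQual_of_small (by decide) (by decide)
        have h := key_ineq S 2 hperf hpos 4 5 3 hq1 hq2 hq3 hu
        have hP : (pairC : Finset (Fin 8)) = {4, 5} := by decide
        have hQ : (pairB : Finset (Fin 8)) = {2, 3} := by decide
        rw [hP, hQ]
        exact h
      · have hq1 : VamosQualified 3 {4, 5, 3, 2} := Or.inl (by decide)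
        have hq2 : VamosQualified 3 {3, 2} := Or.inl (by decide)
        have hq3 : VamosQualified 3 ({4, 5, 2} : Finset (Fin 8)) := by
          refine Or.inr ⟨{4, 5, 2}, Finset.Subset.refl _, by decide, ?_⟩
          have he : insert (3 : Fin 8) ({4, 5, 2} : Finset (Fin 8)) = pairC ∪ pairB := by decide
          rw [he]; exact hcirc
        have hu : ¬ VamosQualified 3 {2} := notQual_of_small (by decide) (by decide)
        have h := key_ineq S 3 hperf hpos 4 5 2 hq1 hq2 hq3 hu
        have hP : (pairC : Finset (Fin 8)) = {4, 5} := by decide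
        have hQ : (pairB : Finset (Fin 8)) = {3, 2} := by decide
        rw [hP, hQ]
        exact h
    · exact absurd rfl hne
    · have hx' : x = 6 ∨ x = 7 := by simpa [pairD] using hx
      rcases hx' with rfl | rfl
      · have hq1 : VamosQualified 6 {4, 5, 6, 7} := Or.inl (by decide)
        have hq2 : VamosQualified 6 {6, 7} := Or.inl (by decide)
        have hq3 : VamosQualified 6 ({4, 5, 7} : Finset (Fin 8)) := by
          refine Or.inr ⟨{4, 5, 7}, Finset.Subset.refl _, by decide, ?_⟩
          have he : insert (6 : Fin 8) ({4, 5, 7} : Finset (Fin 8)) = pairC ∪ pairD := by decide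
          rw [he]; exact hcirc
        have hu : ¬ VamosQualified 6 {7} := notQual_of_small (by decide) (by decide)
        have h := key_ineq S 6 hperf hpos 4 5 7 hq1 hq2 hq3 hu
        have hP : (pairC : Finset (Fin 8)) = {4, 5} := by decide
        have hQ : (pairD : Finset (Fin 8)) = {6, 7} := by decide
        rw [hP, hQ]
        exact h
      · have hq1 : VamosQualified 7 {4, 5, 7, 6} := Or.inl (by decide)
        have hq2 : VamosQualified 7 {7, 6} := Or.inl (by decide)
        have hq3 : VamosQualified 7 ({4, 5, 6} : Finset (Fin 8)) := by
          refine Or.inr ⟨{4, 5, 6}, Finset.Subset.refl _, by decide, ?_⟩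
          have he : insert (7 : Fin 8) ({4, 5, 6} : Finset (Fin 8)) = pairC ∪ pairD := by decide
          rw [he]; exact hcirc
        have hu : ¬ VamosQualified 7 {6} := notQual_of_small (by decide) (by decide)
        have h := key_ineq S 7 hperf hpos 4 5 6 hq1 hq2 hq3 hu
        have hP : (pairC : Finset (Fin 8)) = {4, 5} := by decide
        have hQ : (pairD : Finset (Fin 8)) = {7, 6} := by decide
        rw [hP, hQ]
        exact h
  · rcases hY with rfl | rfl | rfl | rfl
    · exact absurd hcirc.1 (by unfold VamosDep; decide)
    · have hx' : x = 2 ∨ x = 3 := by simpa [pairB] using hx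
      rcases hx' with rfl | rfl
      · have hq1 : VamosQualified 2 {6, 7, 2, 3} := Or.inl (by decide)
        have hq2 : VamosQualified 2 {2, 3} := Or.inl (by decide)
        have hq3 : VamosQualified 2 ({6, 7, 3} : Finset (Fin 8)) := by
          refine Or.inr ⟨{6, 7, 3}, Finset.Subset.refl _, by decide, ?_⟩
          have he : insert (2 : Fin 8) ({6, 7, 3} : Finset (Fin 8)) = pairD ∪ pairB := by decide
          rw [he]; exact hcirc
        have hu : ¬ VamosQualified 2 {3} := notQual_of_small (by decide) (by decide)
        have h := key_ineq S 2 hperf hpos 6 7 3 hq1 hq2 hq3 hu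
        have hP : (pairD : Finset (Fin 8)) = {6, 7} := by decide
        have hQ : (pairB : Finset (Fin 8)) = {2, 3} := by decide
        rw [hP, hQ]
        exact h
      · have hq1 : VamosQualified 3 {6, 7, 3, 2} := Or.inl (by decide)
        have hq2 : VamosQualified 3 {3, 2} := Or.inl (by decide)
        have hq3 : VamosQualified 3 ({6, 7, 2} : Finset (Fin 8)) := by
          refine Or.inr ⟨{6, 7, 2}, Finset.Subset.refl _, by decide, ?_⟩
          have he : insert (3 : Fin 8) ({6, 7, 2} : Finset (Fin 8)) = pairD ∪ pairB := by decide
          rw [he]; exact hcirc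
        have hu : ¬ VamosQualified 3 {2} := notQual_of_small (by decide) (by decide)
        have h := key_ineq S 3 hperf hpos 6 7 2 hq1 hq2 hq3 hu
        have hP : (pairD : Finset (Fin 8)) = {6, 7} := by decide
        have hQ : (pairB : Finset (Fin 8)) = {3, 2} := by decide
        rw [hP, hQ]
        exact h
    · have hx' : x = 4 ∨ x = 5 := by simpa [pairC] using hx
      rcases hx' with rfl | rfl
      · have hq1 : VamosQualified 4 {6, 7, 4, 5} := Or.inl (by decide)
        have hq2 : VamosQualified 4 {4, 5} := Or.inl (by decide)
        have hq3 : VamosQualified 4 ({6, 7, 5} : Finset (Fin 8)) := by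
          refine Or.inr ⟨{6, 7, 5}, Finset.Subset.refl _, by decide, ?_⟩
          have he : insert (4 : Fin 8) ({6, 7, 5} : Finset (Fin 8)) = pairD ∪ pairC := by decide
          rw [he]; exact hcirc
        have hu : ¬ VamosQualified 4 {5} := notQual_of_small (by decide) (by decide)
        have h := key_ineq S 4 hperf hpos 6 7 5 hq1 hq2 hq3 hu
        have hP : (pairD : Finset (Fin 8)) = {6, 7} := by decide
        have hQ : (pairC : Finset (Fin 8)) = {4, 5} := by decide
        rw [hP, hQ]
        exact h
      · have hq1 : VamosQualified 5 {6, 7, 5, 4} := Or.inl (by decide)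
        have hq2 : VamosQualified 5 {5, 4} := Or.inl (by decide)
        have hq3 : VamosQualified 5 ({6, 7, 4} : Finset (Fin 8)) := by
          refine Or.inr ⟨{6, 7, 4}, Finset.Subset.refl _, by decide, ?_⟩
          have he : insert (5 : Fin 8) ({6, 7, 4} : Finset (Fin 8)) = pairD ∪ pairC := by decide
          rw [he]; exact hcirc
        have hu : ¬ VamosQualified 5 {4} := notQual_of_small (by decide) (by decide)
        have h := key_ineq S 5 hperf hpos 6 7 4 hq1 hq2 hq3 hu
        have hP : (pairD : Finset (Fin 8)) = {6, 7} := by decide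
        have hQ : (pairC : Finset (Fin 8)) = {5, 4} := by decide
        rw [hP, hQ]
        exact h
    · exact absurd rfl hne
end
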